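/- arXiv:1908.03193 — 2 statements merged into one kernel-verified Lean document; each statement's English description precedes it below -/
import Mathlib

section
/- If E is F-Dedekind complete and order dense in F, then a subset B of E is a band in E if and only if B is a band in F. -/
open Set

/-- `E` is a vector sublattice (Riesz subspace) of the real vector lattice `F`. -/
def IsRieszSubspace {F : Type*} [Lattice F] [AddCommGroup F] [Module ℝ F] (E : Set F) : Prop :=
  (0 : F) ∈ E ∧ (∀ x ∈ E, ∀ y ∈ E, x + y ∈ E) ∧ (∀ (c : ℝ), ∀ x ∈ E, c • x ∈ E) ∧
    ∀ x ∈ E, ∀ y ∈ E, x ⊔ y ∈ E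

/-- A net `x` F-order converges to `a`: there is a net `y` in `F` with the same index set
which decreases to `0` in `F` (i.e. it is antitone and has infimum `0`) and dominates
`|x i - a|` for every index `i`. -/
def FOrderConvergesTo {F : Type*} [Lattice F] [AddCommGroup F] {ι : Type*} [Preorder ι]
    (x : ι → F) (a : F) : Prop :=
  ∃ y : ι → F, Antitone y ∧ IsGLB (Set.range y) 0 ∧ ∀ i, |x i - a| ≤ y i

/-- `E` is `F`-Dedekind complete: every nonempty subset of `E` which is bounded above by an
element of `F` has a supremum in `E` (a least upper bound within `E`). -/
def FDedekindComplete {F : Type*} [Lattice F] [AddCommGroup F] [Module ℝ F] (E : Set F) : Prop :=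
  ∀ A : Set F, A ⊆ E → A.Nonempty → (∃ z : F, ∀ a ∈ A, a ≤ z) →
    ∃ s ∈ E, (∀ a ∈ A, a ≤ s) ∧ ∀ z ∈ E, (∀ a ∈ A, a ≤ z) → s ≤ z

/-- `B` is a band in the vector sublattice `L` of `F`: a linear subspace of `L` which is
solid in `L` and contains the supremum (computed within `L`) of each of its subsets whenever
this supremum exists in `L`. -/
def IsBandIn {F : Type*} [Lattice F] [AddCommGroup F] [Module ℝ F] (L B : Set F) : Prop :=
  B ⊆ L ∧ (0 : F) ∈ B ∧ (∀ x ∈ B, ∀ y ∈ B, x + y ∈ B) ∧ (∀ (c : ℝ), ∀ x ∈ B, c • x ∈ B) ∧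
    (∀ x ∈ B, ∀ y ∈ L, |y| ≤ |x| → y ∈ B) ∧
    ∀ A ⊆ B, ∀ s ∈ L, ((∀ a ∈ A, a ≤ s) ∧ ∀ z ∈ L, (∀ a ∈ A, a ≤ z) → s ≤ z) → s ∈ B


private lemma neg_mem_of {F : Type*} [Lattice F] [AddCommGroup F] [Module ℝ F]
    {E : Set F} (hE : IsRieszSubspace E) {x : F} (hx : x ∈ E) : -x ∈ E := by
  have h := hE.2.2.1 (-1) x hx
  simpa using h

private lemma least_in_F {F : Type*} [Lattice F] [AddCommGroup F] [Module ℝ F]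
    [CovariantClass F F (· + ·) (· ≤ ·)]
    {E : Set F} (hE : IsRieszSubspace E)
    (hdense : ∀ x : F, 0 < x → ∃ y ∈ E, 0 < y ∧ y ≤ x)
    {A : Set F} {s : F} (hsE : s ∈ E) (hub : ∀ a ∈ A, a ≤ s)
    (hlub : ∀ z ∈ E, (∀ a ∈ A, a ≤ z) → s ≤ z) :
    ∀ z : F, (∀ a ∈ A, a ≤ z) → s ≤ z := by
  intro z hz
  by_contra h
  have h1 : 0 < s - s ⊓ z := by
    rw [sub_pos]
    exact lt_of_le_of_ne inf_le_left (fun he => h (he ▸ inf_le_right))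
  obtain ⟨e, heE, he0, hele⟩ := hdense _ h1
  have hseE : s - e ∈ E := by
    have := hE.2.1 s hsE (-e) (neg_mem_of hE heE)
    simpa [sub_eq_add_neg] using this
  have hubse : ∀ a ∈ A, a ≤ s - e := fun a ha =>
    le_trans (le_inf (hub a ha) (hz a ha)) (le_sub_comm.mp hele)
  exact absurd (hlub _ hseE hubse) (by simpa using (sub_lt_self s he0).not_ge)

private lemma ideal_mem {F : Type*} [Lattice F] [AddCommGroup F] [Module ℝ F]
    [CovariantClass F F (· + ·) (· ≤ ·)]
    {E : Set F} (hE : IsRieszSubspace E) (hDC : FDedekindComplete E)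
    (hdense : ∀ x : F, 0 < x → ∃ y ∈ E, 0 < y ∧ y ≤ x)
    (x : F) {y : F} (h0 : 0 ≤ y) (hyx : y ≤ x) : y ∈ E := by
  obtain ⟨s, hsE, hub, hlub⟩ := hDC {w : F | w ∈ E ∧ 0 ≤ w ∧ w ≤ y}
    (fun w hw => hw.1) ⟨0, hE.1, le_refl 0, h0⟩ ⟨x, fun a ha => ha.2.2.trans hyx⟩
  have hF := least_in_F hE hdense hsE hub hlub
  have hsy : s ≤ y := hF y (fun a ha => ha.2.2)
  have hys : y ≤ s := by
    by_contra h
    have h1 : 0 < y - y ⊓ s := by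
      rw [sub_pos]
      exact lt_of_le_of_ne inf_le_left (fun he => h (he ▸ inf_le_right))
    obtain ⟨e, heE, he0, hele⟩ := hdense _ h1
    have key : ∀ w ∈ {w : F | w ∈ E ∧ 0 ≤ w ∧ w ≤ y}, w ≤ s - e := by
      intro w hw
      have hw' : w ≤ y ⊓ s := le_inf hw.2.2 (hub w hw)
      have hmem : w + e ∈ {w : F | w ∈ E ∧ 0 ≤ w ∧ w ≤ y} := by
        refine ⟨hE.2.1 w hw.1 e heE, add_nonneg hw.2.1 he0.le, ?_⟩
        calc w + e ≤ (y ⊓ s) + (y - y ⊓ s) := add_le_add hw' hele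
          _ = y := by abel
      exact le_sub_iff_add_le.mpr (hub _ hmem)
    have hseE : s - e ∈ E := by
      have := hE.2.1 s hsE (-e) (neg_mem_of hE heE)
      simpa [sub_eq_add_neg] using this
    exact absurd (hlub _ hseE key) (by simpa using (sub_lt_self s he0).not_ge)
  exact (hys.antisymm hsy) ▸ hsE

private lemma solid_mem {F : Type*} [Lattice F] [AddCommGroup F] [Module ℝ F]
    [CovariantClass F F (· + ·) (· ≤ ·)]
    {E : Set F} (hE : IsRieszSubspace E) (hDC : FDedekindComplete E)
    (hdense : ∀ x : F, 0 < x → ∃ y ∈ E, 0 < y ∧ y ≤ x)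
    {x y : F} (hx : x ∈ E) (hyx : |y| ≤ |x|) : y ∈ E := by
  have habs : |x| ∈ E := by
    rw [abs]
    exact hE.2.2.2 x hx (-x) (neg_mem_of hE hx)
  have hp : (y ⊔ 0) ∈ E := by
    refine ideal_mem hE hDC hdense (|x|) le_sup_right ?_
    exact sup_le ((le_abs_self y).trans hyx) ((abs_nonneg y).trans hyx)
  have hn : ((-y) ⊔ 0) ∈ E := by
    refine ideal_mem hE hDC hdense (|x|) le_sup_right ?_
    exact sup_le (((abs_neg y) ▸ le_abs_self (-y)).trans hyx) ((abs_nonneg y).trans hyx)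
  have hmem : (y ⊔ 0) + (-((-y) ⊔ 0)) ∈ E := hE.2.1 _ hp _ (neg_mem_of hE hn)
  have hy : y = (y ⊔ 0) + (-((-y) ⊔ 0)) := by
    rw [neg_sup, neg_neg, neg_zero, add_comm, inf_add_sup, add_zero]
  rwa [← hy] at hmem

/-- if `E` is `F`-Dedekind complete and order dense in `F`, then a subset
`B` of `E` is a band in `E` iff it is a band in `F`. -/
theorem isBandIn_iff_of_fDedekindComplete_of_orderDense {F : Type*} [Lattice F]
    [AddCommGroup F] [Module ℝ F] [CovariantClass F F (· + ·) (· ≤ ·)] [PosSMulMono ℝ F]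
    {E : Set F} (hE : IsRieszSubspace E) (hDC : FDedekindComplete E)
    (hdense : ∀ x : F, 0 < x → ∃ y ∈ E, 0 < y ∧ y ≤ x)
    {B : Set F} (hBE : B ⊆ E) :
    IsBandIn E B ↔ IsBandIn Set.univ B := by
  constructor
  · rintro ⟨-, h0, hadd, hsmul, hsolid, hsup⟩
    refine ⟨subset_univ B, h0, hadd, hsmul, ?_, ?_⟩
    · intro x hx y _ hyx
      exact hsolid x hx y (solid_mem hE hDC hdense (hBE hx) hyx) hyx
    · intro A hAB s _ ⟨hub, hlub⟩
      rcases A.eq_empty_or_nonempty with rfl | hne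
      · have h1 : s ≤ 0 := hlub 0 (mem_univ 0) (by simp)
        have h2 : s ≤ s + s := hlub (s + s) (mem_univ _) (by simp)
        have h3 : 0 ≤ s := by simpa using sub_le_sub_right h2 s
        rwa [h3.antisymm h1] at h0
      · obtain ⟨t, htE, htub, htlub⟩ := hDC A (hAB.trans hBE) hne ⟨s, hub⟩
        have hF := least_in_F hE hdense htE htub htlub
        have hts : t = s := le_antisymm (hF s hub) (hlub t (mem_univ t) htub)
        exact hsup A hAB s (hts ▸ htE) ⟨hts ▸ htub, fun z hz hz' => hts ▸ htlub z hz hz'⟩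
  · rintro ⟨-, h0, hadd, hsmul, hsolid, hsup⟩
    refine ⟨hBE, h0, hadd, hsmul, ?_, ?_⟩
    · intro x hx y _ hyx
      exact hsolid x hx y (mem_univ y) hyx
    · intro A hAB s hsE ⟨hub, hlub⟩
      have hF := least_in_F hE hdense hsE hub hlub
      exact hsup A hAB s (mem_univ s) ⟨hub, fun z _ hz => hF z hz⟩
end

section
/- Let E be a vector lattice such that the canonical embedding Q_E : E → E^~~ is a lattice embedding and Q_E(E) is order dense in E^~~. If E is b-Dedekind complete, then E^~~ is a Dedekind completion of E, i.e. E^δ = E^~~. -/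
open Set

noncomputable section

/-- A subset of a type with an order is order bounded. -/
def OrdBdd {V : Type*} [LE V] (S : Set V) : Prop :=
  ∃ a b : V, ∀ x ∈ S, a ≤ x ∧ x ≤ b

variable (V : Type*) [AddCommGroup V] [Module ℝ V] [Preorder V]

/-- The order dual `V^~` of an ordered vector space `V`: the submodule of those linear
functionals mapping order bounded sets to (order) bounded sets. -/
def obDual : Submodule ℝ (V →ₗ[ℝ] ℝ) where
  carrier := {f | ∀ S : Set V, OrdBdd S → OrdBdd (f '' S)}
  zero_mem' := by
    intro S _
    exact ⟨0, 0, by rintro _ ⟨x, hx, rfl⟩; simp⟩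
  add_mem' := by
    intro f g hf hg S hS
    obtain ⟨a, b, hab⟩ := hf S hS
    obtain ⟨c, d, hcd⟩ := hg S hS
    refine ⟨a + c, b + d, ?_⟩
    rintro _ ⟨x, hx, rfl⟩
    have h1 := hab (f x) ⟨x, hx, rfl⟩
    have h2 := hcd (g x) ⟨x, hx, rfl⟩
    simp only [LinearMap.add_apply]
    constructor <;> linarith [h1.1, h1.2, h2.1, h2.2]
  smul_mem' := by
    intro c f hf S hS
    obtain ⟨a, b, hab⟩ := hf S hS
    refine ⟨-(|c| * max |a| |b|), |c| * max |a| |b|, ?_⟩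
    rintro _ ⟨x, hx, rfl⟩
    obtain ⟨h1a, h1b⟩ := hab (f x) ⟨x, hx, rfl⟩
    have hfx : |f x| ≤ max |a| |b| := by
      refine abs_le.2 ⟨?_, ?_⟩
      · have h := neg_abs_le a
        have h' := le_max_left |a| |b|
        linarith
      · have h := le_abs_self b
        have h' := le_max_right |a| |b|
        linarith
    have habs : |(c • f) x| ≤ |c| * max |a| |b| := by
      simp only [LinearMap.smul_apply, smul_eq_mul, abs_mul]
      exact mul_le_mul_of_nonneg_left hfx (abs_nonneg c)
    exact abs_le.1 habs

/-- The order on the order dual: `f ≤ g` iff `f x ≤ g x` for every `0 ≤ x`. -/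
instance obDualPreorder : Preorder ↥(obDual V) where
  le f g := ∀ x : V, 0 ≤ x → (f : V →ₗ[ℝ] ℝ) x ≤ (g : V →ₗ[ℝ] ℝ) x
  le_refl f x _ := le_rfl
  le_trans f g h h1 h2 x hx := (h1 x hx).trans (h2 x hx)

/-- The order bidual `V^~~` of `V`. -/
abbrev Bidual := ↥(obDual ↥(obDual V))

instance bidualPreorder : Preorder (Bidual V) := obDualPreorder ↥(obDual V)

variable {V}

/-- Evaluation at `x` as a linear functional on the order dual. -/
def evalMap (x : V) : ↥(obDual V) →ₗ[ℝ] ℝ where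
  toFun f := (f : V →ₗ[ℝ] ℝ) x
  map_add' f g := by simp
  map_smul' c f := by simp

variable (E : Type*) [AddCommGroup E] [Module ℝ E] [Lattice E]
  [CovariantClass E E (· + ·) (· ≤ ·)]

/-- The canonical evaluation map `Q_E : E → E^~~`. -/
def QE (x : E) : Bidual E :=
  ⟨evalMap x, by
    intro S hS
    obtain ⟨φ, ψ, h⟩ := hS
    refine ⟨(φ : E →ₗ[ℝ] ℝ) (x ⊔ 0) - (ψ : E →ₗ[ℝ] ℝ) (-x ⊔ 0),
            (ψ : E →ₗ[ℝ] ℝ) (x ⊔ 0) - (φ : E →ₗ[ℝ] ℝ) (-x ⊔ 0), ?_⟩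
    rintro _ ⟨f, hf, rfl⟩
    obtain ⟨hφf, hfψ⟩ := h f hf
    have hx1 : (0 : E) ≤ x ⊔ 0 := le_sup_right
    have hx2 : (0 : E) ≤ -x ⊔ 0 := le_sup_right
    have hdecomp : (f : E →ₗ[ℝ] ℝ) x
        = (f : E →ₗ[ℝ] ℝ) (x ⊔ 0) - (f : E →ₗ[ℝ] ℝ) (-x ⊔ 0) := by
      rw [← map_sub]
      congr 1
      have := posPart_sub_negPart x
      simpa [posPart, negPart] using this.symm
    have h1 := hφf _ hx1
    have h2 := hfψ _ hx1
    have h3 := hφf _ hx2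
    have h4 := hfψ _ hx2
    have hev : evalMap x f = (f : E →ₗ[ℝ] ℝ) x := rfl
    rw [hev, hdecomp]
    exact ⟨by linarith, by linarith⟩⟩

/-- `A ⊆ E` is `b`-order bounded: its canonical image in `E^~~` is order bounded. -/
def BOrdBddSet (A : Set E) : Prop := OrdBdd (QE E '' A)

/-- `Q_E` is an (injective) lattice embedding of `E` into `E^~~`. -/
def QLatticeEmbedding : Prop :=
  Function.Injective (QE E) ∧ (∀ x y : E, x ≤ y ↔ QE E x ≤ QE E y) ∧
    ∀ x y : E, IsLUB {QE E x, QE E y} (QE E (x ⊔ y))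

/-- `E` is `b`-Dedekind complete: every nonempty subset of `E` bounded above by an element
of `E^~~` has a supremum in `E`. -/
def BDedekindComplete : Prop :=
  ∀ S : Set E, S.Nonempty → (∃ φ : Bidual E, ∀ a ∈ S, QE E a ≤ φ) → ∃ s : E, IsLUB S s

variable {E}

/-- The net `x` in `E` is `b`-order convergent to `a`: some net in `E^~~` with the same
index set decreases to `0` in `E^~~` and dominates `|x i - a|` (canonically embedded). -/
def BOConv {ι : Type*} [Preorder ι] (x : ι → E) (a : E) : Prop :=
  ∃ y : ι → Bidual E, Antitone y ∧ IsGLB (Set.range y) 0 ∧ ∀ i, QE E (|x i - a|) ≤ y i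

/-- `x_α ↓_b 0` : the net `x` is decreasing and `inf_α x_α = 0` holds in `E^~~`. -/
def DownB0 {ι : Type*} [Preorder ι] (x : ι → E) : Prop :=
  Antitone x ∧ IsGLB (Set.range fun i => QE E (x i)) 0

section Operators

variable {G : Type*} [AddCommGroup G] [Module ℝ G] [Lattice G]
  [CovariantClass G G (· + ·) (· ≤ ·)]

/-- `T` is an order bounded operator. -/
def OrderBddOp (T : E →ₗ[ℝ] G) : Prop := ∀ A : Set E, OrdBdd A → OrdBdd (T '' A)

/-- `T` is a `b`-order bounded operator: it maps `b`-order bounded sets to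
`b`-order bounded sets. -/
def BOrdBddOp (T : E →ₗ[ℝ] G) : Prop := ∀ A : Set E, BOrdBddSet E A → BOrdBddSet G (T '' A)

/-- `T` is `b`-order continuous: `x_α →bo 0` in `E` implies `T x_α →bo 0` in `G`. -/
def BOCont (T : E →ₗ[ℝ] G) : Prop :=
  ∀ (ι : Type*) [Preorder ι] [Nonempty ι] [IsDirected ι (· ≤ ·)] (x : ι → E),
    BOConv x 0 → BOConv (fun i => T (x i)) 0

end Operators

/-!
The order dual of an ordered vector space in which every element has a positive part (and hence
the Riesz decomposition property) again has positive parts, given by the Riesz–Kantorovich formula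
`f⁺ x = sup {f y | 0 ≤ y ≤ x}` for `0 ≤ x`. Applying this twice to the lattice `E` gives positive
parts in `E^~~`.

If `ψ ≰ θ` in `E^~~`, order density yields `x₀ ∈ E` with `0 < Q x₀ ≤ (ψ - θ)⁺`, so `Q (x + x₀) ≤ ψ`
whenever `Q x ≤ θ` and `Q x ≤ ψ`. When such shifts keep a set below its supremum `s ∈ E`, `s - x₀`
is a smaller upper bound, which is absurd. This argument shows that `Q` preserves suprema and that
`φ ≤ Q t` for `t = sup {x | Q x ≤ φ}`, which exists by `b`-Dedekind completeness. So `E` majorizes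
`E^~~`, and a bounded set `S ⊆ E^~~` has supremum `Q s`, where `s` is the supremum of
`{x | ∃ φ ∈ S, Q x ≤ φ}`.
-/

namespace obDual

instance : AddLeftMono (obDual V) :=
  ⟨fun _ _ _ hfg x hx => by simpa using hfg x hx⟩

instance : PosSMulMono ℝ (obDual V) :=
  ⟨fun _ hc _ _ hfg x hx => by simpa using mul_le_mul_of_nonneg_left (hfg x hx) hc⟩

-- `Bidual V` carries its own preorder instance `bidualPreorder`, which instance search does not
-- see through, so the previous instance does not apply to it.
instance : AddLeftMono (Bidual V) :=
  ⟨fun _ _ _ hfg x hx => by simpa using hfg x hx⟩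

theorem apply_le_apply_of_nonneg [AddLeftMono V] {f : obDual V} (hf : 0 ≤ f) {x y : V}
    (hxy : x ≤ y) : (f : V →ₗ[ℝ] ℝ) x ≤ (f : V →ₗ[ℝ] ℝ) y := by
  simpa using hf (y - x) (sub_nonneg.2 hxy)

end obDual

def HasPosParts (W : Type*) [AddCommGroup W] [Preorder W] : Prop :=
  ∀ w : W, ∃ p, IsLUB {w, 0} p

theorem hasPosParts_of_lattice (W : Type*) [AddCommGroup W] [Lattice W] : HasPosParts W :=
  fun w => ⟨w ⊔ 0, isLUB_pair⟩

namespace HasPosParts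

variable {W : Type*} [AddCommGroup W] [Preorder W]

def pos (hW : HasPosParts W) (w : W) : W := (hW w).choose

theorem le_pos (hW : HasPosParts W) (w : W) : w ≤ hW.pos w := (hW w).choose_spec.1 (by simp)

theorem pos_nonneg (hW : HasPosParts W) (w : W) : 0 ≤ hW.pos w := (hW w).choose_spec.1 (by simp)

theorem pos_le (hW : HasPosParts W) {w g : W} (hwg : w ≤ g) (hg : 0 ≤ g) : hW.pos w ≤ g :=
  (hW w).choose_spec.2 (by simp [upperBounds, hwg, hg])

variable [AddLeftMono W]

theorem pos_sub_nonneg (hW : HasPosParts W) (w : W) : 0 ≤ hW.pos w - w :=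
  sub_nonneg.2 (hW.le_pos w)

theorem exists_decomposition (hW : HasPosParts W) {f₁ f₂ g : W} (hg : 0 ≤ g)
    (hgf : g ≤ f₁ + f₂) (hf₁ : 0 ≤ f₁) (hf₂ : 0 ≤ f₂) :
    ∃ u v : W, 0 ≤ u ∧ u ≤ f₁ ∧ 0 ≤ v ∧ v ≤ f₂ ∧ u + v = g := by
  have hv : hW.pos (g - f₁) ≤ g := hW.pos_le (sub_le_self g hf₁) hg
  refine ⟨g - hW.pos (g - f₁), hW.pos (g - f₁), sub_nonneg.2 hv, ?_, hW.pos_nonneg _,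
    hW.pos_le (sub_le_iff_le_add'.2 hgf) hf₂, sub_add_cancel _ _⟩
  exact sub_le_comm.1 (hW.le_pos _)

end HasPosParts

namespace obDual

def intervalSup (f : obDual V) (x : V) : ℝ := sSup ((f : V →ₗ[ℝ] ℝ) '' Icc 0 x)

theorem bddAbove_image_Icc (f : obDual V) (x : V) :
    BddAbove ((f : V →ₗ[ℝ] ℝ) '' Icc 0 x) := by
  obtain ⟨_, b, hb⟩ := f.2 (Icc 0 x) ⟨0, x, fun _ hy => hy⟩
  exact ⟨b, fun r hr => (hb r hr).2⟩

theorem le_intervalSup (f : obDual V) {x y : V} (hy : 0 ≤ y) (hyx : y ≤ x) :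
    (f : V →ₗ[ℝ] ℝ) y ≤ intervalSup f x :=
  le_csSup (bddAbove_image_Icc f x) ⟨y, ⟨hy, hyx⟩, rfl⟩

theorem intervalSup_le (f : obDual V) {x : V} (hx : 0 ≤ x) {c : ℝ}
    (hc : ∀ y : V, 0 ≤ y → y ≤ x → (f : V →ₗ[ℝ] ℝ) y ≤ c) : intervalSup f x ≤ c :=
  csSup_le ⟨_, ⟨x, ⟨hx, le_rfl⟩, rfl⟩⟩ fun _ ⟨y, ⟨hy, hyx⟩, hfy⟩ => hfy ▸ hc y hy hyx

theorem intervalSup_nonneg (f : obDual V) {x : V} (hx : 0 ≤ x) : 0 ≤ intervalSup f x := by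
  simpa using le_intervalSup f le_rfl hx

theorem intervalSup_add [AddLeftMono V] (hV : HasPosParts V) (f : obDual V) {x y : V}
    (hx : 0 ≤ x) (hy : 0 ≤ y) : intervalSup f (x + y) = intervalSup f x + intervalSup f y := by
  have hxy : 0 ≤ x + y := add_nonneg hx hy
  refine le_antisymm (intervalSup_le f hxy fun z hz hzxy => ?_) ?_
  · obtain ⟨u, v, hu, hux, hv, hvy, rfl⟩ := hV.exists_decomposition hz hzxy hx hy
    rw [map_add]
    exact add_le_add (le_intervalSup f hu hux) (le_intervalSup f hv hvy)
  · rw [← le_sub_iff_add_le]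
    refine intervalSup_le f hx fun u hu hux => ?_
    rw [le_sub_comm]
    refine intervalSup_le f hy fun v hv hvy => ?_
    rw [le_sub_iff_add_le', ← map_add]
    exact le_intervalSup f (add_nonneg hu hv) (add_le_add hux hvy)

theorem intervalSup_zero [AddLeftMono V] (hV : HasPosParts V) (f : obDual V) :
    intervalSup f 0 = 0 := by
  have h := intervalSup_add hV f (le_refl (0 : V)) le_rfl
  rw [add_zero] at h
  linarith

theorem intervalSup_smul_le [PosSMulMono ℝ V] (f : obDual V) {c : ℝ} (hc : 0 < c) {x : V}
    (hx : 0 ≤ x) : intervalSup f (c • x) ≤ c * intervalSup f x := by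
  refine intervalSup_le f (smul_nonneg hc.le hx) fun y hy hyx => ?_
  have hy' : c⁻¹ • y ≤ x := by
    simpa [smul_smul, inv_mul_cancel₀ hc.ne'] using
      smul_le_smul_of_nonneg_left hyx (inv_nonneg.2 hc.le)
  calc (f : V →ₗ[ℝ] ℝ) y = c * (f : V →ₗ[ℝ] ℝ) (c⁻¹ • y) := by
        rw [map_smul, smul_eq_mul, mul_inv_cancel_left₀ hc.ne']
    _ ≤ c * intervalSup f x := by
        gcongr
        exact le_intervalSup f (smul_nonneg (inv_nonneg.2 hc.le) hy) hy'

theorem intervalSup_smul [AddLeftMono V] [PosSMulMono ℝ V] (hV : HasPosParts V) (f : obDual V)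
    {c : ℝ} (hc : 0 ≤ c) {x : V} (hx : 0 ≤ x) : intervalSup f (c • x) = c * intervalSup f x := by
  rcases hc.eq_or_lt with rfl | hc
  · rw [zero_smul, zero_mul, intervalSup_zero hV]
  refine le_antisymm (intervalSup_smul_le f hc hx) ?_
  have h := intervalSup_smul_le f (inv_pos.2 hc) (smul_nonneg hc.le hx)
  rw [smul_smul, inv_mul_cancel₀ hc.ne', one_smul] at h
  rwa [← le_inv_mul_iff₀ hc]

/-- The Riesz–Kantorovich functional `x ↦ intervalSup f x` on the positive cone, extended
additively through `x = x⁺ - (x⁺ - x)`. -/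
def posPartFun (hV : HasPosParts V) (f : obDual V) (x : V) : ℝ :=
  intervalSup f (hV.pos x) - intervalSup f (hV.pos x - x)

section

variable [AddLeftMono V] (hV : HasPosParts V)

theorem posPartFun_eq_sub (f : obDual V) {a b x : V} (ha : 0 ≤ a) (hb : 0 ≤ b)
    (hx : x = a - b) : posPartFun hV f x = intervalSup f a - intervalSup f b := by
  have h := congrArg (intervalSup f) (show hV.pos x + b = a + (hV.pos x - x) by rw [hx]; abel)
  rw [intervalSup_add hV f (hV.pos_nonneg x) hb,
    intervalSup_add hV f ha (hV.pos_sub_nonneg x)] at h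
  rw [posPartFun]
  linarith

theorem posPartFun_of_nonneg (f : obDual V) {x : V} (hx : 0 ≤ x) :
    posPartFun hV f x = intervalSup f x := by
  rw [posPartFun_eq_sub hV f hx le_rfl (sub_zero x).symm, intervalSup_zero hV, sub_zero]

theorem posPartFun_add (f : obDual V) (x y : V) :
    posPartFun hV f (x + y) = posPartFun hV f x + posPartFun hV f y := by
  rw [posPartFun_eq_sub hV f (add_nonneg (hV.pos_nonneg x) (hV.pos_nonneg y))
    (add_nonneg (hV.pos_sub_nonneg x) (hV.pos_sub_nonneg y)) (by abel),
    intervalSup_add hV f (hV.pos_nonneg x) (hV.pos_nonneg y),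
    intervalSup_add hV f (hV.pos_sub_nonneg x) (hV.pos_sub_nonneg y), posPartFun, posPartFun]
  ring

theorem posPartFun_smul [PosSMulMono ℝ V] (f : obDual V) (c : ℝ) (x : V) :
    posPartFun hV f (c • x) = c * posPartFun hV f x := by
  have ha := hV.pos_nonneg x
  have hb := hV.pos_sub_nonneg x
  rcases le_or_gt 0 c with hc | hc
  · rw [posPartFun_eq_sub hV f (smul_nonneg hc ha) (smul_nonneg hc hb)
      (by rw [← smul_sub, sub_sub_cancel]),
      intervalSup_smul hV f hc ha, intervalSup_smul hV f hc hb, posPartFun]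
    ring
  · have hc' : 0 ≤ -c := by linarith
    rw [posPartFun_eq_sub hV f (smul_nonneg hc' hb) (smul_nonneg hc' ha)
      (by rw [← smul_sub, sub_sub_cancel_left, neg_smul, smul_neg, neg_neg]),
      intervalSup_smul hV f hc' ha, intervalSup_smul hV f hc' hb, posPartFun]
    ring

theorem posPartFun_mono (f : obDual V) : Monotone (posPartFun hV f) := fun x y hxy => by
  have h := intervalSup_nonneg f (sub_nonneg.2 hxy)
  rw [← posPartFun_of_nonneg hV f (sub_nonneg.2 hxy)] at h
  have := posPartFun_add hV f x (y - x)
  rw [add_sub_cancel] at this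
  linarith

def posPart [PosSMulMono ℝ V] (f : obDual V) : obDual V :=
  ⟨{ toFun := posPartFun hV f
     map_add' := posPartFun_add hV f
     map_smul' := posPartFun_smul hV f },
   fun _ ⟨a, b, hab⟩ => ⟨posPartFun hV f a, posPartFun hV f b, by
     rintro _ ⟨x, hx, rfl⟩
     exact ⟨posPartFun_mono hV f (hab x hx).1, posPartFun_mono hV f (hab x hx).2⟩⟩⟩

theorem posPart_apply_of_nonneg [PosSMulMono ℝ V] (f : obDual V) {x : V} (hx : 0 ≤ x) :
    (posPart hV f : V →ₗ[ℝ] ℝ) x = intervalSup f x :=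
  posPartFun_of_nonneg hV f hx

theorem isLUB_posPart [PosSMulMono ℝ V] (f : obDual V) : IsLUB {f, 0} (posPart hV f) := by
  refine ⟨?_, fun g hg => ?_⟩
  · rintro g (rfl | rfl) x hx <;> rw [posPart_apply_of_nonneg hV _ hx]
    · exact le_intervalSup g hx le_rfl
    · simpa using intervalSup_nonneg f hx
  · have hfg : f ≤ g := hg (by simp)
    have hg0 : 0 ≤ g := hg (by simp)
    intro x hx
    rw [posPart_apply_of_nonneg hV f hx]
    exact intervalSup_le f hx fun y hy hyx => (hfg y hy).trans (apply_le_apply_of_nonneg hg0 hyx)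

end

end obDual

theorem HasPosParts.obDual [AddLeftMono V] [PosSMulMono ℝ V] (hV : HasPosParts V) :
    HasPosParts (obDual V) :=
  fun f => ⟨_, obDual.isLUB_posPart hV f⟩

theorem nonpos_of_forall_add_le {α : Type*} [AddCommGroup α] [Preorder α] [AddLeftMono α]
    {A : Set α} {s x₀ : α} (hs : IsLUB A s) (h : ∀ x ∈ A, x + x₀ ≤ s) : x₀ ≤ 0 :=
  (le_sub_self_iff s).1 (hs.2 fun x hx => le_sub_iff_add_le.2 (h x hx))

theorem QE_add (x y : E) : QE E (x + y) = QE E x + QE E y :=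
  Subtype.ext <| LinearMap.ext fun f => map_add (f : E →ₗ[ℝ] ℝ) x y

theorem QE_zero : QE E 0 = 0 :=
  Subtype.ext <| LinearMap.ext fun f => map_zero (f : E →ₗ[ℝ] ℝ)

theorem QE_neg (x : E) : QE E (-x) = -QE E x :=
  Subtype.ext <| LinearMap.ext fun f => map_neg (f : E →ₗ[ℝ] ℝ) x

theorem monotone_QE : Monotone (QE E) := fun _ _ hxy _ hf =>
  obDual.apply_le_apply_of_nonneg hf hxy

theorem not_QE_pos_of_nonpos {x : E} (hx : x ≤ 0) : ¬ 0 < QE E x := fun hpos =>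
  hpos.not_ge (QE_zero (E := E) ▸ monotone_QE hx)

variable (E) in
def QOrderDense : Prop := ∀ φ : Bidual E, 0 < φ → ∃ x : E, 0 < QE E x ∧ QE E x ≤ φ

section

variable [PosSMulMono ℝ E]

theorem hasPosParts_bidual : HasPosParts (Bidual E) :=
  HasPosParts.obDual (V := obDual E) (hasPosParts_of_lattice E).obDual

theorem exists_QE_pos_add_le (hdense : QOrderDense E) {ψ θ : Bidual E} (h : ¬ψ ≤ θ) :
    ∃ x₀ : E, 0 < QE E x₀ ∧ ∀ x : E, QE E x ≤ θ → QE E x ≤ ψ → QE E (x + x₀) ≤ ψ := by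
  have hne : ¬ψ - θ ≤ 0 := fun h' => h (sub_nonpos.1 h')
  have hρ : (0 : Bidual E) < hasPosParts_bidual.pos (ψ - θ) :=
    lt_of_le_not_ge (hasPosParts_bidual.pos_nonneg _) fun hρ =>
      hne ((hasPosParts_bidual.le_pos _).trans hρ)
  obtain ⟨x₀, hx₀, hx₀ρ⟩ := hdense _ hρ
  refine ⟨x₀, hx₀, fun x hxθ hxψ => ?_⟩
  have hle : QE E x₀ ≤ ψ - QE E x :=
    hx₀ρ.trans (hasPosParts_bidual.pos_le (sub_le_sub_left hxθ ψ) (sub_nonneg.2 hxψ))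
  rw [QE_add]
  exact (le_sub_iff_add_le' (α := Bidual E)).1 hle

theorem le_QE_of_isLUB (hdense : QOrderDense E) {φ : Bidual E} {t : E}
    (ht : IsLUB {x | QE E x ≤ φ} t) : φ ≤ QE E t := by
  by_contra h
  obtain ⟨x₀, hx₀, hadd⟩ := exists_QE_pos_add_le hdense h
  exact not_QE_pos_of_nonpos
    (nonpos_of_forall_add_le ht fun x hx => ht.1 (hadd x (monotone_QE (ht.1 hx)) hx)) hx₀

theorem exists_le_QE (hdense : QOrderDense E) (hbDC : BDedekindComplete E) (φ : Bidual E) :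
    ∃ x : E, φ ≤ QE E x := by
  set ρ := hasPosParts_bidual.pos φ
  have hρ : QE E 0 ≤ ρ := QE_zero (E := E) ▸ hasPosParts_bidual.pos_nonneg φ
  obtain ⟨t, ht⟩ := hbDC {x | QE E x ≤ ρ} ⟨0, hρ⟩ ⟨ρ, fun _ hx => hx⟩
  exact ⟨t, (hasPosParts_bidual.le_pos φ).trans (le_QE_of_isLUB hdense ht)⟩

theorem exists_QE_le (hdense : QOrderDense E) (hbDC : BDedekindComplete E) (φ : Bidual E) :
    ∃ x : E, QE E x ≤ φ := by
  obtain ⟨x, hx⟩ := exists_le_QE hdense hbDC (-φ)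
  exact ⟨-x, QE_neg x ▸ (neg_le (α := Bidual E)).1 hx⟩

theorem isLUB_QE_image (hemb : QLatticeEmbedding E) (hdense : QOrderDense E) {A : Set E}
    {s : E} (hs : IsLUB A s) : IsLUB (QE E '' A) (QE E s) := by
  refine ⟨monotone_QE.mem_upperBounds_image hs.1, fun χ hχ => ?_⟩
  by_contra h
  obtain ⟨x₀, hx₀, hadd⟩ := exists_QE_pos_add_le hdense h
  refine not_QE_pos_of_nonpos (nonpos_of_forall_add_le hs fun x hx => ?_) hx₀
  exact (hemb.2.1 _ _).2 (hadd x (hχ ⟨x, hx, rfl⟩) (monotone_QE (hs.1 hx)))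

theorem exists_isLUB_of_bddAbove (hemb : QLatticeEmbedding E) (hdense : QOrderDense E)
    (hbDC : BDedekindComplete E) {S : Set (Bidual E)} (hS : S.Nonempty) (hbdd : BddAbove S) :
    ∃ φ : Bidual E, IsLUB S φ := by
  obtain ⟨φ₀, hφ₀⟩ := hS
  obtain ⟨β, hβ⟩ := hbdd
  obtain ⟨x₀, hx₀⟩ := exists_QE_le hdense hbDC φ₀
  obtain ⟨s, hs⟩ := hbDC {x | ∃ φ ∈ S, QE E x ≤ φ} ⟨x₀, φ₀, hφ₀, hx₀⟩
    ⟨β, fun _ ⟨φ, hφ, hx⟩ => hx.trans (hβ hφ)⟩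
  refine ⟨QE E s, fun φ hφ => ?_, fun χ hχ => (isLUB_QE_image hemb hdense hs).2 ?_⟩
  · obtain ⟨x, hx⟩ := exists_QE_le hdense hbDC φ
    obtain ⟨t, ht⟩ := hbDC {x | QE E x ≤ φ} ⟨x, hx⟩ ⟨φ, fun _ hy => hy⟩
    exact (le_QE_of_isLUB hdense ht).trans (monotone_QE (ht.2 fun y hy => hs.1 ⟨φ, hφ, hy⟩))
  · rintro _ ⟨x, ⟨φ, hφ, hx⟩, rfl⟩
    exact hx.trans (hχ hφ)

end

/-- if `Q_E : E → E^~~` is a lattice embedding with order dense range and `E`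
is `b`-Dedekind complete, then `E^~~` is a Dedekind completion of `E`: `E^~~` is Dedekind
complete and `Q_E(E)` is a majorizing, order dense sublattice of `E^~~`. -/
theorem bidual_isDedekindCompletion {E : Type*} [AddCommGroup E] [Module ℝ E] [Lattice E]
    [CovariantClass E E (· + ·) (· ≤ ·)] [PosSMulMono ℝ E]
    (hemb : QLatticeEmbedding E)
    (hdense : ∀ φ : Bidual E, 0 < φ → ∃ x : E, 0 < QE E x ∧ QE E x ≤ φ)
    (hbDC : BDedekindComplete E) :
    (∀ S : Set (Bidual E), S.Nonempty → BddAbove S → ∃ φ : Bidual E, IsLUB S φ) ∧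
      (∀ φ : Bidual E, ∃ x : E, φ ≤ QE E x) ∧
      (∀ φ : Bidual E, 0 < φ → ∃ x : E, 0 < QE E x ∧ QE E x ≤ φ) :=
  ⟨fun _ hS hbdd => exists_isLUB_of_bddAbove hemb hdense hbDC hS hbdd,
    exists_le_QE hdense hbDC, hdense⟩
end
end
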